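/- arXiv:1005.0454 — 5 statements merged into one kernel-verified Lean document; each statement's English description precedes it below -/
import Mathlib

section
/- Let f:[a,b]→ℝ be differentiable on (a,b) with |f'(t)| ≤ M for all t ∈ (a,b). Then for all x ∈ [a,b], |f(x) - (1/(b-a))∫_a^b f(t) dt| ≤ [1/4 + (x-(a+b)/2)²/(b-a)²]·(b-a)·M. -/
open Set intervalIntegral

theorem ostrowski (a b M : ℝ) (hab : a < b) (f f' : ℝ → ℝ)
    (hc : ContinuousOn f (Set.Icc a b))
    (hd : ∀ t ∈ Set.Ioo a b, HasDerivAt f (f' t) t)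
    (hM : ∀ t ∈ Set.Ioo a b, |f' t| ≤ M)
    (x : ℝ) (hx : x ∈ Set.Icc a b) :
    |f x - (1 / (b - a)) * ∫ t in a..b, f t| ≤
      (1 / 4 + (x - (a + b) / 2) ^ 2 / (b - a) ^ 2) * (b - a) * M := by
  have hba : (0:ℝ) < b - a := sub_pos.mpr hab
  have hne : b - a ≠ 0 := ne_of_gt hba
  have hM0 : 0 ≤ M := le_trans (abs_nonneg _) (hM ((a+b)/2) ⟨by linarith, by linarith⟩)
  have key : ∀ s t, s ∈ Icc a b → t ∈ Icc a b → s < t → |f t - f s| ≤ M * (t - s) := by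
    intro s t hs ht hst
    obtain ⟨c, hcmem, hceq⟩ := exists_hasDerivAt_eq_slope f f' hst
      (hc.mono (Icc_subset_Icc hs.1 ht.2))
      (fun y hy => hd y ⟨lt_of_le_of_lt hs.1 hy.1, lt_of_lt_of_le hy.2 ht.2⟩)
    have hts : t - s ≠ 0 := by linarith [hst]
    have heq : f t - f s = f' c * (t - s) := by
      field_simp at hceq; linarith [hceq]
    rw [heq, abs_mul, abs_of_pos (by linarith : (0:ℝ) < t - s)]
    exact mul_le_mul_of_nonneg_right
      (hM c ⟨lt_of_le_of_lt hs.1 hcmem.1, lt_of_lt_of_le hcmem.2 ht.2⟩) (by linarith)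
  have lip : ∀ t ∈ Icc a b, |f x - f t| ≤ M * |x - t| := by
    intro t ht
    rcases lt_trichotomy x t with h | h | h
    · rw [abs_sub_comm, abs_of_neg (by linarith : x - t < 0)]
      simpa using key x t hx ht h
    · simp [h, hM0]
    · rw [abs_of_pos (by linarith : (0:ℝ) < x - t)]
      exact key t x ht hx h
  have hcu : ContinuousOn f (uIcc a b) := by rwa [uIcc_of_le hab.le]
  have hfi : IntervalIntegrable f MeasureTheory.volume a b := hcu.intervalIntegrable
  have habsint : ∀ u v : ℝ, IntervalIntegrable (fun t => |x - t|) MeasureTheory.volume u v :=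
    fun u v => ((continuous_const.sub continuous_id).abs).intervalIntegrable u v
  have h1 : (∫ t in a..x, |x - t|) = (x-a)^2/2 := by
    rw [integral_congr (g := fun t => x - t)
      (fun t ht => by
        rw [uIcc_of_le hx.1] at ht
        exact abs_of_nonneg (sub_nonneg.mpr ht.2))]
    rw [integral_sub intervalIntegrable_const intervalIntegrable_id, integral_const, integral_id]
    simp [smul_eq_mul]; ring
  have h2 : (∫ t in x..b, |x - t|) = (b-x)^2/2 := by
    rw [integral_congr (g := fun t => t - x)
      (fun t ht => by
        rw [uIcc_of_le hx.2] at ht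
        rw [abs_sub_comm]
        exact abs_of_nonneg (by linarith [ht.1]))]
    rw [integral_sub intervalIntegrable_id intervalIntegrable_const, integral_const, integral_id]
    simp [smul_eq_mul]; ring
  have habs : (∫ t in a..b, |x - t|) = ((x-a)^2 + (b-x)^2)/2 := by
    rw [← integral_add_adjacent_intervals (habsint a x) (habsint x b), h1, h2]; ring
  have hgi : IntervalIntegrable (fun t => |f x - f t|) MeasureTheory.volume a b :=
    ((continuousOn_const.sub hcu).abs).intervalIntegrable
  have hb1 : |∫ t in a..b, (f x - f t)| ≤ M * (((x-a)^2 + (b-x)^2)/2) := by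
    calc |∫ t in a..b, (f x - f t)| ≤ ∫ t in a..b, |f x - f t| := by
          simpa [Real.norm_eq_abs] using
            norm_integral_le_integral_norm (f := fun t => f x - f t) hab.le
      _ ≤ ∫ t in a..b, M * |x - t| := by
          apply integral_mono_on hab.le hgi ((habsint a b).const_mul M)
          intro t ht
          exact lip t ht
      _ = M * (((x-a)^2 + (b-x)^2)/2) := by
          rw [integral_const_mul, habs]
  have main : f x - (1/(b-a)) * ∫ t in a..b, f t
      = (1/(b-a)) * ∫ t in a..b, (f x - f t) := by
    rw [integral_sub intervalIntegrable_const hfi, integral_const, smul_eq_mul]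
    field_simp
  calc |f x - (1 / (b - a)) * ∫ t in a..b, f t|
      = (1/(b-a)) * |∫ t in a..b, (f x - f t)| := by
        rw [main, abs_mul, abs_of_pos (by positivity)]
    _ ≤ (1/(b-a)) * (M * (((x-a)^2 + (b-x)^2)/2)) :=
        mul_le_mul_of_nonneg_left hb1 (by positivity)
    _ = (1 / 4 + (x - (a + b) / 2) ^ 2 / (b - a) ^ 2) * (b - a) * M := by
        field_simp
        ring
end

section
/- Let a < b and α₁, β₁ ∈ [a,b] with α₁ < β₁. Define p(t) = t - α₁ for t ∈ [a,(a+b)/2] and p(t) = t - β₁ for t ∈ ((a+b)/2, b]. Then ∫_a^b |p(t)| dt = [(α₁-a)² + (b-β₁)²]/2 + [(a+b-2α₁)² + (a+b-2β₁)²]/8, provided α₁ ≤ (a+b)/2 ≤ β₁. -/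
open Set intervalIntegral
open scoped Interval

/-! On each half of `[a, b]` the kernel is `|t - c|` with its kink `c` inside that half, so the
integral over each half is the area of two right isosceles triangles. -/

theorem intervalIntegral.integral_abs_sub_of_mem_Icc {x y c : ℝ} (hxc : x ≤ c) (hcy : c ≤ y) :
    ∫ t in x..y, |t - c| = ((c - x) ^ 2 + (y - c) ^ 2) / 2 := by
  have hint : ∀ u v : ℝ, IntervalIntegrable (fun t => |t - c|) MeasureTheory.volume u v :=
    fun u v => (by fun_prop : Continuous fun t : ℝ => |t - c|).intervalIntegrable u v
  have hleft : ∫ t in x..c, |t - c| = ∫ t in x..c, -(t - c) := by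
    refine integral_congr fun t ht => ?_
    rw [uIcc_of_le hxc] at ht
    exact abs_of_nonpos (by linarith [ht.2])
  have hright : ∫ t in c..y, |t - c| = ∫ t in c..y, (t - c) := by
    refine integral_congr fun t ht => ?_
    rw [uIcc_of_le hcy] at ht
    exact abs_of_nonneg (by linarith [ht.1])
  rw [← integral_add_adjacent_intervals (hint x c) (hint c y), hleft, hright, integral_neg,
    integral_comp_sub_right (fun t => t), integral_comp_sub_right (fun t => t), integral_id,
    integral_id]
  ring

theorem intervalIntegral.integral_eq_add_of_eqOn_uIoc {E : Type*} [NormedAddCommGroup E]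
    [NormedSpace ℝ E] {f g h : ℝ → E} {a m b : ℝ}
    (hg : IntervalIntegrable g MeasureTheory.volume a m)
    (hh : IntervalIntegrable h MeasureTheory.volume m b)
    (hfg : EqOn f g (Ι a m)) (hfh : EqOn f h (Ι m b)) :
    ∫ t in a..b, f t = (∫ t in a..m, g t) + ∫ t in m..b, h t := by
  rw [← integral_add_adjacent_intervals (hg.congr hfg.symm) (hh.congr hfh.symm),
    integral_congr_ae (MeasureTheory.ae_of_all _ hfg),
    integral_congr_ae (MeasureTheory.ae_of_all _ hfh)]

theorem kernel_L1_norm_general (a b α₁ β₁ : ℝ)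
    (hα : a ≤ α₁) (hαm : α₁ ≤ (a + b) / 2) (hmβ : (a + b) / 2 ≤ β₁) (hβ : β₁ ≤ b)
    (p : ℝ → ℝ) (hp : ∀ t, p t = if t ≤ (a + b) / 2 then t - α₁ else t - β₁) :
    (∫ t in a..b, |p t|) =
      ((α₁ - a) ^ 2 + (b - β₁) ^ 2) / 2 +
        ((a + b - 2 * α₁) ^ 2 + (a + b - 2 * β₁) ^ 2) / 8 := by
  have hleft : EqOn (fun t => |p t|) (fun t => |t - α₁|) (Ι a ((a + b) / 2)) := by
    intro t ht
    rw [uIoc_of_le (hα.trans hαm)] at ht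
    simp only [hp, if_pos ht.2]
  have hright : EqOn (fun t => |p t|) (fun t => |t - β₁|) (Ι ((a + b) / 2) b) := by
    intro t ht
    rw [uIoc_of_le (hmβ.trans hβ)] at ht
    simp only [hp, if_neg (not_le.2 ht.1)]
  have hcont : ∀ c : ℝ, Continuous fun t : ℝ => |t - c| := fun c => by fun_prop
  rw [integral_eq_add_of_eqOn_uIoc ((hcont α₁).intervalIntegrable _ _)
      ((hcont β₁).intervalIntegrable _ _) hleft hright,
    integral_abs_sub_of_mem_Icc hα hαm, integral_abs_sub_of_mem_Icc hmβ hβ]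
  ring

theorem kernel_L1_norm (a b α₁ β₁ : ℝ) (hab : a < b)
    (hα : a ≤ α₁) (hαm : α₁ ≤ (a + b) / 2) (hmβ : (a + b) / 2 ≤ β₁) (hβ : β₁ ≤ b)
    (hαβ : α₁ < β₁)
    (p : ℝ → ℝ) (hp : ∀ t, p t = if t ≤ (a + b) / 2 then t - α₁ else t - β₁) :
    (∫ t in a..b, |p t|) =
      ((α₁ - a) ^ 2 + (b - β₁) ^ 2) / 2 +
        ((a + b - 2 * α₁) ^ 2 + (a + b - 2 * β₁) ^ 2) / 8 :=
  kernel_L1_norm_general a b α₁ β₁ hα hαm hmβ hβ p hp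
end

section
/- Let f:[a,b]×[c,d]→ℝ be absolutely continuous with bounded mixed second partial derivative: |∂²f/∂t∂s(t,s)| ≤ M on (a,b)×(c,d). Let a ≤ α₁ ≤ (a+b)/2 ≤ β₁ ≤ b and c ≤ α₂ ≤ (c+d)/2 ≤ β₂ ≤ d with α₁ < β₁ and α₂ < β₂. Define H = (α₁-a)[(α₂-c)f(a,c)+(d-β₂)f(a,d)] + (b-β₁)[(α₂-c)f(b,c)+(d-β₂)f(b,d)] and G = (β₁-α₁)[(α₂-c)f((a+b)/2,c)+(d-β₂)f((a+b)/2,d)] + (β₂-α₂)[(α₁-a)f(a,(c+d)/2)+(b-β₁)f(b,(c+d)/2)]. Then |(β₁-α₁)(β₂-α₂)f((a+b)/2,(c+d)/2) + H + G - (β₂-α₂)∫_a^b f(t,(c+d)/2) dt - (β₁-α₁)∫_c^d f((a+b)/2,s) ds - ∫_a^b [(α₂-c)f(t,c)+(d-β₂)f(t,d)] dt - ∫_c^d [(α₁-a)f(a,s)+(b-β₁)f(b,s)] ds + ∫_a^b∫_c^d f(t,s) ds dt| ≤ ([(α₁-a)²+(b-β₁)²]/2 + [(a+b-2α₁)²+(a+b-2β₁)²]/8)·([(α₂-c)²+(d-β₂)²]/2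 + [(c+d-2α₂)²+(c+d-2β₂)²]/8)·M. -/
/-!
Write `R g` for the remainder of the one-dimensional rule with nodes `a, (a+b)/2, b` and
weights `α - a, β - α, b - β`. Splitting `[a, b]` at `α, (a+b)/2, β` writes `R g` as four
integrals of `g z - g t` with `z` an endpoint of the piece, so `|R g| ≤ C(a, b, α, β) L` for
every `L`-Lipschitz `g`. By Fubini, the two-dimensional expression is `R` applied in `s` to
`k s = R (f · s)`. The bound on the mixed derivative makes `t ↦ f t s - f t s'` Lipschitz with
constant `M |s - s'|`, so `k` is `C(a, b, α₁, β₁) M`-Lipschitz and the one-dimensional bound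
applies a second time.
-/

open Set intervalIntegral MeasureTheory
open scoped NNReal

noncomputable def ostrowskiRemainder (a b α β : ℝ) (g : ℝ → ℝ) : ℝ :=
  (β - α) * g ((a + b) / 2) + (α - a) * g a + (b - β) * g b - ∫ t in a..b, g t

noncomputable def ostrowskiConstant (a b α β : ℝ) : ℝ :=
  ((α - a) ^ 2 + (b - β) ^ 2) / 2 + ((a + b - 2 * α) ^ 2 + (a + b - 2 * β) ^ 2) / 8

lemma ostrowskiConstant_nonneg (a b α β : ℝ) : 0 ≤ ostrowskiConstant a b α β := by
  unfold ostrowskiConstant; positivity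

lemma ostrowskiRemainder_sub {a b α β : ℝ} {g h : ℝ → ℝ}
    (hg : IntervalIntegrable g volume a b) (hh : IntervalIntegrable h volume a b) :
    ostrowskiRemainder a b α β (fun t => g t - h t)
      = ostrowskiRemainder a b α β g - ostrowskiRemainder a b α β h := by
  simp only [ostrowskiRemainder, integral_sub hg hh]
  ring

lemma integral_abs_sub {x y z : ℝ} (hxz : x ≤ z) (hzy : z ≤ y) :
    ∫ t in x..y, |t - z| = ((z - x) ^ 2 + (y - z) ^ 2) / 2 := by
  have hint : ∀ u v : ℝ, IntervalIntegrable (fun t => |t - z|) volume u v :=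
    fun u v => (by fun_prop : Continuous fun t : ℝ => |t - z|).intervalIntegrable u v
  have hleft : ∫ t in x..z, |t - z| = ∫ t in x..z, -(t - z) :=
    integral_congr fun t ht => by
      rw [uIcc_of_le hxz] at ht
      simp only [abs_of_nonpos (sub_nonpos.2 ht.2)]
  have hright : ∫ t in z..y, |t - z| = ∫ t in z..y, (t - z) :=
    integral_congr fun t ht => by
      rw [uIcc_of_le hzy] at ht
      simp only [abs_of_nonneg (sub_nonneg.2 ht.1)]
  rw [← integral_add_adjacent_intervals (hint x z) (hint z y), hleft, hright,
    intervalIntegral.integral_neg, intervalIntegral.integral_comp_sub_right fun t => t,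
    intervalIntegral.integral_comp_sub_right fun t => t, integral_id, integral_id]
  ring

lemma abs_mul_sub_integral_le {g : ℝ → ℝ} {K : ℝ≥0} {x y z : ℝ}
    (hg : LipschitzOnWith K g (Icc x y)) (hxz : x ≤ z) (hzy : z ≤ y) :
    |(y - x) * g z - ∫ t in x..y, g t| ≤ K * (((z - x) ^ 2 + (y - z) ^ 2) / 2) := by
  have hxy : x ≤ y := hxz.trans hzy
  have hgi : IntervalIntegrable g volume x y := hg.continuousOn.intervalIntegrable_of_Icc hxy
  calc |(y - x) * g z - ∫ t in x..y, g t| = ‖∫ t in x..y, (g z - g t)‖ := by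
        rw [integral_sub intervalIntegrable_const hgi, intervalIntegral.integral_const,
          smul_eq_mul, Real.norm_eq_abs]
    _ ≤ ∫ t in x..y, K * |t - z| := by
        refine norm_integral_le_of_norm_le hxy (ae_of_all _ fun t ht => ?_)
          ((by fun_prop : Continuous fun t : ℝ => (K : ℝ) * |t - z|).intervalIntegrable x y)
        simpa only [Real.norm_eq_abs, Real.dist_eq, abs_sub_comm t z] using
          hg.dist_le_mul z ⟨hxz, hzy⟩ t (Ioc_subset_Icc_self ht)
    _ = K * (((z - x) ^ 2 + (y - z) ^ 2) / 2) := by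
        rw [intervalIntegral.integral_const_mul, integral_abs_sub hxz hzy]

theorem abs_ostrowskiRemainder_le {g : ℝ → ℝ} {K : ℝ≥0} {a b α β : ℝ}
    (hg : LipschitzOnWith K g (Icc a b)) (hα : a ≤ α) (hαm : α ≤ (a + b) / 2)
    (hmβ : (a + b) / 2 ≤ β) (hβ : β ≤ b) :
    |ostrowskiRemainder a b α β g| ≤ ostrowskiConstant a b α β * K := by
  set m := (a + b) / 2 with hm
  have hint : ∀ x y, a ≤ x → y ≤ b → x ≤ y → IntervalIntegrable g volume x y :=
    fun x y hx hy hxy =>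
      (hg.continuousOn.mono (Icc_subset_Icc hx hy)).intervalIntegrable_of_Icc hxy
  have piece : ∀ x y z, a ≤ x → y ≤ b → x ≤ z → z ≤ y →
      |(y - x) * g z - ∫ t in x..y, g t| ≤ K * (((z - x) ^ 2 + (y - z) ^ 2) / 2) :=
    fun x y z hx hy hxz hzy => abs_mul_sub_integral_le (hg.mono (Icc_subset_Icc hx hy)) hxz hzy
  have hsplit : ∫ t in a..b, g t = (∫ t in a..α, g t) + (∫ t in α..m, g t)
      + (∫ t in m..β, g t) + ∫ t in β..b, g t := by
    rw [integral_add_adjacent_intervals (hint a α le_rfl (by linarith) hα)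
        (hint α m hα (by linarith) hαm),
      integral_add_adjacent_intervals (hint a m le_rfl (by linarith) (by linarith))
        (hint m β (by linarith) (by linarith) hmβ),
      integral_add_adjacent_intervals (hint a β le_rfl hβ (by linarith))
        (hint β b (by linarith) le_rfl hβ)]
  have hrem : ostrowskiRemainder a b α β g
      = ((α - a) * g a - ∫ t in a..α, g t) + ((m - α) * g m - ∫ t in α..m, g t)
        + ((β - m) * g m - ∫ t in m..β, g t) + ((b - β) * g b - ∫ t in β..b, g t) := by
    rw [ostrowskiRemainder, hsplit]; ring
  have h₁ := piece a α a le_rfl (by linarith) le_rfl hα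
  have h₂ := piece α m m hα (by linarith) hαm le_rfl
  have h₃ := piece m β m (by linarith) hβ le_rfl hmβ
  have h₄ := piece β b b (by linarith) le_rfl hβ le_rfl
  rw [hrem]
  calc _ ≤ |(α - a) * g a - ∫ t in a..α, g t| + |(m - α) * g m - ∫ t in α..m, g t|
        + |(β - m) * g m - ∫ t in m..β, g t| + |(b - β) * g b - ∫ t in β..b, g t| :=
        (abs_add_le _ _).trans
          (by gcongr; exact (abs_add_le _ _).trans (by gcongr; exact abs_add_le _ _))
    _ ≤ _ := add_le_add (add_le_add (add_le_add h₁ h₂) h₃) h₄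
    _ = ostrowskiConstant a b α β * K := by rw [ostrowskiConstant, hm]; ring

lemma lipschitzOnWith_Icc_of_hasDerivAt_Ioo {g g' : ℝ → ℝ} {C : ℝ≥0} {x y : ℝ}
    (hxy : x < y) (hg : ContinuousOn g (Icc x y)) (hderiv : ∀ t ∈ Ioo x y, HasDerivAt g (g' t) t)
    (hbound : ∀ t ∈ Ioo x y, ‖g' t‖₊ ≤ C) : LipschitzOnWith C g (Icc x y) := by
  rw [← closure_Ioo hxy.ne] at hg ⊢
  exact ((convex_Ioo x y).lipschitzOnWith_of_nnnorm_hasDerivWithin_le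
    (fun t ht => (hderiv t ht).hasDerivWithinAt) hbound).closure hg

lemma lipschitzOnWith_sub_swap {F : ℝ → ℝ → ℝ} {M : ℝ≥0} {S T : Set ℝ}
    (h : ∀ s ∈ T, ∀ s' ∈ T, LipschitzOnWith (M * nndist s s') (fun t => F t s - F t s') S) :
    ∀ u ∈ S, ∀ v ∈ S, LipschitzOnWith (M * nndist u v) (fun s => F u s - F v s) T :=
  fun u hu v hv => LipschitzOnWith.of_dist_le_mul fun s hs s' hs' => by
    rw [dist_eq_norm, sub_sub_sub_comm, ← dist_eq_norm]
    refine ((h s hs s' hs').dist_le_mul u hu v hv).trans_eq ?_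
    push_cast [coe_nndist]
    ring

theorem lipschitzOnWith_sub_of_abs_mixed_deriv_le {f f₁ f₂ : ℝ → ℝ → ℝ} {M : ℝ≥0}
    {a b c d : ℝ} (hab : a < b) (hcd : c < d)
    (hc : ContinuousOn (Function.uncurry f) (Icc a b ×ˢ Icc c d))
    (hd1 : ∀ t ∈ Ioo a b, ∀ s ∈ Ioo c d, HasDerivAt (fun u => f u s) (f₁ t s) t)
    (hd2 : ∀ t ∈ Ioo a b, ∀ s ∈ Ioo c d, HasDerivAt (fun v => f₁ t v) (f₂ t s) s)
    (hM : ∀ t ∈ Ioo a b, ∀ s ∈ Ioo c d, |f₂ t s| ≤ M) :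
    ∀ s ∈ Icc c d, ∀ s' ∈ Icc c d,
      LipschitzOnWith (M * nndist s s') (fun t => f t s - f t s') (Icc a b) := by
  have hf₁ : ∀ t ∈ Ioo a b, LipschitzOnWith M (f₁ t) (Ioo c d) := fun t ht =>
    (convex_Ioo c d).lipschitzOnWith_of_nnnorm_hasDerivWithin_le
      (fun s hs => (hd2 t ht s hs).hasDerivWithinAt) fun s hs => by
        rw [← NNReal.coe_le_coe, coe_nnnorm, Real.norm_eq_abs]; exact hM t ht s hs
  have hinterior : ∀ s ∈ Ioo c d, ∀ s' ∈ Ioo c d,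
      LipschitzOnWith (M * nndist s s') (fun t => f t s - f t s') (Icc a b) :=
    fun s hs s' hs' => lipschitzOnWith_Icc_of_hasDerivAt_Ioo hab
      ((hc.uncurry_right s (Ioo_subset_Icc_self hs)).sub
        (hc.uncurry_right s' (Ioo_subset_Icc_self hs')))
      (fun t ht => (hd1 t ht s hs).sub (hd1 t ht s' hs'))
      fun t ht => by
        rw [← NNReal.coe_le_coe, coe_nnnorm, ← dist_eq_norm, NNReal.coe_mul, coe_nndist]
        exact (hf₁ t ht).dist_le_mul s hs s' hs'
  -- `f₁` is controlled only inside the rectangle, so the edges `s = c, d` are reached through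
  -- the continuity of `f` in `s`.
  have hvertical : ∀ u ∈ Icc a b, ∀ v ∈ Icc a b,
      LipschitzOnWith (M * nndist u v) (fun s => f u s - f v s) (Icc c d) := by
    intro u hu v hv
    rw [← closure_Ioo hcd.ne]
    refine (lipschitzOnWith_sub_swap hinterior u hu v hv).closure ?_
    rw [closure_Ioo hcd.ne]
    exact (hc.uncurry_left u hu).sub (hc.uncurry_left v hv)
  exact lipschitzOnWith_sub_swap hvertical

lemma ostrowskiRemainder_ostrowskiRemainder {f : ℝ → ℝ → ℝ} {a b c d α₁ β₁ α₂ β₂ : ℝ}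
    (hab : a ≤ b) (hcd : c ≤ d)
    (hc : ContinuousOn (Function.uncurry f) (Icc a b ×ˢ Icc c d)) :
    ostrowskiRemainder c d α₂ β₂ (fun s => ostrowskiRemainder a b α₁ β₁ fun t => f t s) =
      (β₁ - α₁) * (β₂ - α₂) * f ((a + b) / 2) ((c + d) / 2)
        + ((α₁ - a) * ((α₂ - c) * f a c + (d - β₂) * f a d)
          + (b - β₁) * ((α₂ - c) * f b c + (d - β₂) * f b d))
        + ((β₁ - α₁) * ((α₂ - c) * f ((a + b) / 2) c + (d - β₂) * f ((a + b) / 2) d)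
          + (β₂ - α₂) * ((α₁ - a) * f a ((c + d) / 2) + (b - β₁) * f b ((c + d) / 2)))
        - (β₂ - α₂) * (∫ t in a..b, f t ((c + d) / 2))
        - (β₁ - α₁) * (∫ s in c..d, f ((a + b) / 2) s)
        - (∫ t in a..b, (α₂ - c) * f t c + (d - β₂) * f t d)
        - (∫ s in c..d, (α₁ - a) * f a s + (b - β₁) * f b s)
        + ∫ t in a..b, ∫ s in c..d, f t s := by
  have hrect : IntegrableOn (Function.uncurry f) (Ioc a b ×ˢ Ioc c d) :=
    (hc.integrableOn_compact (isCompact_Icc.prod isCompact_Icc)).mono_set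
      (prod_mono Ioc_subset_Icc_self Ioc_subset_Icc_self)
  have hmarginal : IntervalIntegrable (fun s => ∫ t in a..b, f t s) volume c d := by
    have hprod : Integrable (Function.uncurry f)
        ((volume.restrict (Ioc a b)).prod (volume.restrict (Ioc c d))) := by
      rwa [Measure.prod_restrict, ← Measure.volume_eq_prod]
    rw [intervalIntegrable_iff_integrableOn_Ioc_of_le hcd]
    simpa only [IntegrableOn, integral_of_le hab, Function.uncurry_apply_pair] using
      hprod.integral_prod_right
  have hswap : ∫ t in a..b, ∫ s in c..d, f t s = ∫ s in c..d, ∫ t in a..b, f t s :=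
    intervalIntegral_intervalIntegral_swap (by rwa [uIoc_of_le hab, uIoc_of_le hcd])
  have hrow : ∀ s ∈ Icc c d, IntervalIntegrable (fun t => f t s) volume a b := fun s hs =>
    (hc.uncurry_right s hs).intervalIntegrable_of_Icc hab
  have hcol : ∀ t ∈ Icc a b, IntervalIntegrable (f t) volume c d := fun t ht =>
    (hc.uncurry_left t ht).intervalIntegrable_of_Icc hcd
  have hm : (a + b) / 2 ∈ Icc a b := ⟨by linarith, by linarith⟩
  have ha : a ∈ Icc a b := left_mem_Icc.2 hab
  have hb : b ∈ Icc a b := right_mem_Icc.2 hab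
  simp only [ostrowskiRemainder]
  rw [integral_sub ((((hcol _ hm).const_mul _).add ((hcol a ha).const_mul _)).add
      ((hcol b hb).const_mul _)) hmarginal,
    integral_add (((hcol _ hm).const_mul _).add ((hcol a ha).const_mul _))
      ((hcol b hb).const_mul _),
    integral_add ((hcol _ hm).const_mul _) ((hcol a ha).const_mul _),
    integral_add ((hrow c (left_mem_Icc.2 hcd)).const_mul _)
      ((hrow d (right_mem_Icc.2 hcd)).const_mul _),
    integral_add ((hcol a ha).const_mul _) ((hcol b hb).const_mul _), hswap]
  simp only [intervalIntegral.integral_const_mul]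
  ring

theorem sarikaya_main_general (a b c d M : ℝ) (hab : a < b) (hcd : c < d)
    (α₁ β₁ α₂ β₂ : ℝ)
    (hα₁ : a ≤ α₁) (hα₁m : α₁ ≤ (a + b) / 2) (hmβ₁ : (a + b) / 2 ≤ β₁) (hβ₁ : β₁ ≤ b)
    (hα₂ : c ≤ α₂) (hα₂m : α₂ ≤ (c + d) / 2) (hmβ₂ : (c + d) / 2 ≤ β₂) (hβ₂ : β₂ ≤ d)
    (f f₁ f₂ : ℝ → ℝ → ℝ)
    (hc : ContinuousOn (fun p : ℝ × ℝ => f p.1 p.2) (Set.Icc a b ×ˢ Set.Icc c d))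
    (hd1 : ∀ t ∈ Set.Icc a b, ∀ s ∈ Set.Icc c d, HasDerivAt (fun u => f u s) (f₁ t s) t)
    (hd2 : ∀ t ∈ Set.Ioo a b, ∀ s ∈ Set.Ioo c d, HasDerivAt (fun v => f₁ t v) (f₂ t s) s)
    (hM : ∀ t ∈ Set.Ioo a b, ∀ s ∈ Set.Ioo c d, |f₂ t s| ≤ M)
    (H G : ℝ)
    (hH : H = (α₁ - a) * ((α₂ - c) * f a c + (d - β₂) * f a d)
        + (b - β₁) * ((α₂ - c) * f b c + (d - β₂) * f b d))
    (hG : G = (β₁ - α₁) * ((α₂ - c) * f ((a + b) / 2) c + (d - β₂) * f ((a + b) / 2) d)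
        + (β₂ - α₂) * ((α₁ - a) * f a ((c + d) / 2) + (b - β₁) * f b ((c + d) / 2))) :
    |(β₁ - α₁) * (β₂ - α₂) * f ((a + b) / 2) ((c + d) / 2) + H + G
        - (β₂ - α₂) * (∫ t in a..b, f t ((c + d) / 2))
        - (β₁ - α₁) * (∫ s in c..d, f ((a + b) / 2) s)
        - (∫ t in a..b, (α₂ - c) * f t c + (d - β₂) * f t d)
        - (∫ s in c..d, (α₁ - a) * f a s + (b - β₁) * f b s)
        + ∫ t in a..b, ∫ s in c..d, f t s| ≤
      (((α₁ - a) ^ 2 + (b - β₁) ^ 2) / 2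
          + ((a + b - 2 * α₁) ^ 2 + (a + b - 2 * β₁) ^ 2) / 8) *
        (((α₂ - c) ^ 2 + (d - β₂) ^ 2) / 2
          + ((c + d - 2 * α₂) ^ 2 + (c + d - 2 * β₂) ^ 2) / 8) * M := by
  have hM₀ : 0 ≤ M := (abs_nonneg _).trans
    (hM ((a + b) / 2) ⟨by linarith, by linarith⟩ ((c + d) / 2) ⟨by linarith, by linarith⟩)
  lift M to ℝ≥0 using hM₀
  have hmixed := lipschitzOnWith_sub_of_abs_mixed_deriv_le hab hcd hc
    (fun t ht s hs => hd1 t (Ioo_subset_Icc_self ht) s (Ioo_subset_Icc_self hs)) hd2 hM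
  have hk : LipschitzOnWith (ostrowskiConstant a b α₁ β₁ * M).toNNReal
      (fun s => ostrowskiRemainder a b α₁ β₁ (fun t => f t s)) (Icc c d) :=
    LipschitzOnWith.of_dist_le' fun s hs s' hs' => by
      rw [Real.dist_eq, ← ostrowskiRemainder_sub
        ((hc.uncurry_right s hs).intervalIntegrable_of_Icc hab.le)
        ((hc.uncurry_right s' hs').intervalIntegrable_of_Icc hab.le)]
      refine (abs_ostrowskiRemainder_le (hmixed s hs s' hs') hα₁ hα₁m hmβ₁ hβ₁).trans_eq ?_
      push_cast [coe_nndist]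
      ring
  subst hH hG
  rw [← ostrowskiRemainder_ostrowskiRemainder hab.le hcd.le hc]
  refine (abs_ostrowskiRemainder_le hk hα₂ hα₂m hmβ₂ hβ₂).trans_eq ?_
  rw [Real.coe_toNNReal _ (mul_nonneg (ostrowskiConstant_nonneg ..) M.coe_nonneg)]
  simp only [ostrowskiConstant]
  ring

theorem sarikaya_main (a b c d M : ℝ) (hab : a < b) (hcd : c < d)
    (α₁ β₁ α₂ β₂ : ℝ)
    (hα₁ : a ≤ α₁) (hα₁m : α₁ ≤ (a + b) / 2) (hmβ₁ : (a + b) / 2 ≤ β₁) (hβ₁ : β₁ ≤ b)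
    (hα₂ : c ≤ α₂) (hα₂m : α₂ ≤ (c + d) / 2) (hmβ₂ : (c + d) / 2 ≤ β₂) (hβ₂ : β₂ ≤ d)
    (hαβ₁ : α₁ < β₁) (hαβ₂ : α₂ < β₂)
    (f f₁ f₂ : ℝ → ℝ → ℝ)
    (hc : ContinuousOn (fun p : ℝ × ℝ => f p.1 p.2) (Set.Icc a b ×ˢ Set.Icc c d))
    (hd1 : ∀ t ∈ Set.Icc a b, ∀ s ∈ Set.Icc c d, HasDerivAt (fun u => f u s) (f₁ t s) t)
    (hd2 : ∀ t ∈ Set.Ioo a b, ∀ s ∈ Set.Ioo c d, HasDerivAt (fun v => f₁ t v) (f₂ t s) s)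
    (hM : ∀ t ∈ Set.Ioo a b, ∀ s ∈ Set.Ioo c d, |f₂ t s| ≤ M)
    (H G : ℝ)
    (hH : H = (α₁ - a) * ((α₂ - c) * f a c + (d - β₂) * f a d)
        + (b - β₁) * ((α₂ - c) * f b c + (d - β₂) * f b d))
    (hG : G = (β₁ - α₁) * ((α₂ - c) * f ((a + b) / 2) c + (d - β₂) * f ((a + b) / 2) d)
        + (β₂ - α₂) * ((α₁ - a) * f a ((c + d) / 2) + (b - β₁) * f b ((c + d) / 2))) :
    |(β₁ - α₁) * (β₂ - α₂) * f ((a + b) / 2) ((c + d) / 2) + H + G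
        - (β₂ - α₂) * (∫ t in a..b, f t ((c + d) / 2))
        - (β₁ - α₁) * (∫ s in c..d, f ((a + b) / 2) s)
        - (∫ t in a..b, (α₂ - c) * f t c + (d - β₂) * f t d)
        - (∫ s in c..d, (α₁ - a) * f a s + (b - β₁) * f b s)
        + ∫ t in a..b, ∫ s in c..d, f t s| ≤
      (((α₁ - a) ^ 2 + (b - β₁) ^ 2) / 2
          + ((a + b - 2 * α₁) ^ 2 + (a + b - 2 * β₁) ^ 2) / 8) *
        (((α₂ - c) ^ 2 + (d - β₂) ^ 2) / 2
          + ((c + d - 2 * α₂) ^ 2 + (c + d - 2 * β₂) ^ 2) / 8) * M :=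
  sarikaya_main_general a b c d M hab hcd α₁ β₁ α₂ β₂ hα₁ hα₁m hmβ₁ hβ₁ hα₂ hα₂m hmβ₂ hβ₂ f f₁ f₂ hc
    hd1 hd2 hM H G hH hG
end

section
/- Let f:[a,b]×[c,d]→ℝ be absolutely continuous with |∂²f/∂t∂s| ≤ M on (a,b)×(c,d). Then |(b-a)(d-c)·f((a+b)/2,(c+d)/2) - (d-c)∫_a^b f(t,(c+d)/2) dt - (b-a)∫_c^d f((a+b)/2,s) ds + ∫_a^b∫_c^d f(t,s) ds dt| ≤ (1/16)·M·(b-a)²(d-c)². -/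
/-!
The expression is the double integral of the mixed difference
`f t s - f t y₀ - f x₀ s + f x₀ y₀` with `(x₀, y₀)` the centre of the rectangle. Applying the mean
value theorem first in `s` to `∂f/∂t` and then in `t` bounds this difference by
`M |t - x₀| |s - y₀|`, and `∫ₐᵇ |t - x₀| dt = (b - a)² / 4`.
-/

open Set intervalIntegral MeasureTheory

theorem abs_mixed_difference_le {f f₁ f₂ : ℝ → ℝ → ℝ} {I J : Set ℝ} {M : ℝ}
    (hI : Convex ℝ I) (hJ : Convex ℝ J)
    (hf : ∀ t ∈ I, ∀ s ∈ J, HasDerivAt (fun u => f u s) (f₁ t s) t)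
    (hf₁ : ∀ t ∈ I, ∀ s ∈ J, HasDerivAt (f₁ t) (f₂ t s) s)
    (hM : ∀ t ∈ I, ∀ s ∈ J, |f₂ t s| ≤ M) {x t y s : ℝ}
    (hx : x ∈ I) (ht : t ∈ I) (hy : y ∈ J) (hs : s ∈ J) :
    |f t s - f t y - f x s + f x y| ≤ M * |t - x| * |s - y| := by
  have hf₁_lip : ∀ u ∈ I, ‖f₁ u s - f₁ u y‖ ≤ M * |s - y| := fun u hu =>
    hJ.norm_image_sub_le_of_norm_hasDerivWithin_le
      (fun v hv => (hf₁ u hu v hv).hasDerivWithinAt) (hM u hu) hy hs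
  have hlip := hI.norm_image_sub_le_of_norm_hasDerivWithin_le (f := fun u => f u s - f u y)
    (fun u hu => ((hf u hu s hs).sub (hf u hu y hy)).hasDerivWithinAt) hf₁_lip hx ht
  rw [Real.norm_eq_abs, Real.norm_eq_abs] at hlip
  calc |f t s - f t y - f x s + f x y| = |f t s - f t y - (f x s - f x y)| := by ring_nf
    _ ≤ M * |s - y| * |t - x| := hlip
    _ = M * |t - x| * |s - y| := by ring

theorem integral_abs_sub_of_mem_Icc {a b m : ℝ} (hm : m ∈ Icc a b) :
    ∫ t in a..b, |t - m| = ((m - a) ^ 2 + (b - m) ^ 2) / 2 := by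
  have hcont : Continuous fun t : ℝ => |t - m| := by fun_prop
  rw [← integral_add_adjacent_intervals (hcont.intervalIntegrable a m)
    (hcont.intervalIntegrable m b), integral_of_le hm.1, integral_of_le hm.2,
    ← uIoc_of_ge hm.1, ← uIoc_of_le hm.2]
  have h (c : ℝ) : ∫ t in uIoc m c, |t - m| = (c - m) ^ 2 / 2 := by
    simpa [one_add_one_eq_two] using integral_pow_abs_sub_uIoc (a := m) (b := c) (n := 1)
  rw [h, h]
  ring

theorem integral_abs_sub_midpoint {a b : ℝ} (hab : a ≤ b) :
    ∫ t in a..b, |t - (a + b) / 2| = (b - a) ^ 2 / 4 := by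
  rw [integral_abs_sub_of_mem_Icc ⟨by linarith, by linarith⟩]
  ring

theorem abs_integral_le_integral_of_forall_Ioo {f g : ℝ → ℝ} {a b : ℝ} (hab : a ≤ b)
    (h : ∀ t ∈ Ioo a b, |f t| ≤ g t) (hg : IntervalIntegrable g volume a b) :
    |∫ t in a..b, f t| ≤ ∫ t in a..b, g t := by
  refine (Real.norm_eq_abs _).symm.trans_le (norm_integral_le_of_norm_le hab ?_ hg)
  filter_upwards [Measure.ae_ne volume b] with t htb ht
  exact h t ⟨ht.1, ht.2.lt_of_ne htb⟩

theorem abs_integral_integral_le_of_abs_le_mul {g : ℝ → ℝ → ℝ} {φ ψ : ℝ → ℝ} {a b c d : ℝ}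
    (hab : a ≤ b) (hcd : c ≤ d) (h : ∀ t ∈ Ioo a b, ∀ s ∈ Ioo c d, |g t s| ≤ φ t * ψ s)
    (hφ : IntervalIntegrable φ volume a b) (hψ : IntervalIntegrable ψ volume c d) :
    |∫ t in a..b, ∫ s in c..d, g t s| ≤ (∫ t in a..b, φ t) * ∫ s in c..d, ψ s := by
  rw [← intervalIntegral.integral_mul_const]
  refine abs_integral_le_integral_of_forall_Ioo hab (fun t ht => ?_) (hφ.mul_const _)
  rw [← intervalIntegral.integral_const_mul]
  exact abs_integral_le_integral_of_forall_Ioo hcd (h t ht) (hψ.const_mul _)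

theorem continuousOn_parametric_intervalIntegral_of_continuousOn {f : ℝ → ℝ → ℝ} {K : Set ℝ}
    {c d : ℝ} (hf : ContinuousOn (Function.uncurry f) (K ×ˢ uIcc c d)) :
    ContinuousOn (fun t => ∫ s in c..d, f t s) K := by
  rw [continuousOn_iff_continuous_domRestrict]
  -- clamping `s` to `[[c, d]]` changes no integrand and makes `f` jointly continuous on `K × ℝ`
  have hext : Continuous (Function.uncurry fun (t : K) s =>
      f t (projIcc (c ⊓ d) (c ⊔ d) inf_le_sup s)) :=
    hf.comp_continuous
      (f := fun p : K × ℝ => ((p.1 : ℝ), (projIcc (c ⊓ d) (c ⊔ d) inf_le_sup p.2 : ℝ)))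
      (by fun_prop) fun p => ⟨p.1.2, (projIcc _ _ inf_le_sup p.2).2⟩
  refine (continuous_parametric_intervalIntegral_of_continuous' hext c d).congr fun t =>
    integral_congr fun s hs => ?_
  simp only [projIcc_of_mem _ hs]

theorem integral_integral_mixed_difference {f : ℝ → ℝ → ℝ} {a b c d x y : ℝ}
    (hf : ContinuousOn (Function.uncurry f) (uIcc a b ×ˢ uIcc c d))
    (hx : x ∈ uIcc a b) (hy : y ∈ uIcc c d) :
    ∫ t in a..b, ∫ s in c..d, (f t s - f t y - f x s + f x y) =
      (∫ t in a..b, ∫ s in c..d, f t s) - (d - c) * (∫ t in a..b, f t y)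
        - (b - a) * (∫ s in c..d, f x s) + (b - a) * (d - c) * f x y := by
  have hrow : ∀ t ∈ uIcc a b, IntervalIntegrable (f t) volume c d := fun t ht =>
    (hf.comp (continuousOn_const.prodMk continuousOn_id) fun s hs => ⟨ht, hs⟩).intervalIntegrable
  have hcol : IntervalIntegrable (fun t => f t y) volume a b :=
    (hf.comp (continuousOn_id.prodMk continuousOn_const) fun t ht => ⟨ht, hy⟩).intervalIntegrable
  have hsec : IntervalIntegrable (fun t => ∫ s in c..d, f t s) volume a b :=
    (continuousOn_parametric_intervalIntegral_of_continuousOn hf).intervalIntegrable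
  calc ∫ t in a..b, ∫ s in c..d, (f t s - f t y - f x s + f x y)
      = ∫ t in a..b, ((∫ s in c..d, f t s) - (d - c) * f t y - (∫ s in c..d, f x s)
          + (d - c) * f x y) := integral_congr fun t ht => by
        rw [integral_add (((hrow t ht).sub intervalIntegrable_const).sub (hrow x hx))
          intervalIntegrable_const, integral_sub ((hrow t ht).sub intervalIntegrable_const)
          (hrow x hx), integral_sub (hrow t ht) intervalIntegrable_const]
        simp only [intervalIntegral.integral_const, smul_eq_mul]
    _ = _ := by
        rw [integral_add ((hsec.sub (hcol.const_mul _)).sub intervalIntegrable_const)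
          intervalIntegrable_const, integral_sub (hsec.sub (hcol.const_mul _))
          intervalIntegrable_const, integral_sub hsec (hcol.const_mul _)]
        simp only [intervalIntegral.integral_const_mul, intervalIntegral.integral_const,
          smul_eq_mul]
        ring

theorem sarikaya_midpoint (a b c d M : ℝ) (hab : a < b) (hcd : c < d)
    (f f₁ f₂ : ℝ → ℝ → ℝ)
    (hc : ContinuousOn (fun p : ℝ × ℝ => f p.1 p.2) (Set.Icc a b ×ˢ Set.Icc c d))
    (hd1 : ∀ t ∈ Set.Icc a b, ∀ s ∈ Set.Icc c d, HasDerivAt (fun u => f u s) (f₁ t s) t)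
    (hd2 : ∀ t ∈ Set.Ioo a b, ∀ s ∈ Set.Ioo c d, HasDerivAt (fun v => f₁ t v) (f₂ t s) s)
    (hM : ∀ t ∈ Set.Ioo a b, ∀ s ∈ Set.Ioo c d, |f₂ t s| ≤ M) :
    |(b - a) * (d - c) * f ((a + b) / 2) ((c + d) / 2)
        - (d - c) * (∫ t in a..b, f t ((c + d) / 2))
        - (b - a) * (∫ s in c..d, f ((a + b) / 2) s)
        + ∫ t in a..b, ∫ s in c..d, f t s| ≤
      (1 / 16) * M * (b - a) ^ 2 * (d - c) ^ 2 := by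
  have hx₀ : (a + b) / 2 ∈ Ioo a b := ⟨by linarith, by linarith⟩
  have hy₀ : (c + d) / 2 ∈ Ioo c d := ⟨by linarith, by linarith⟩
  have hf : ContinuousOn (Function.uncurry f) (uIcc a b ×ˢ uIcc c d) := by
    rwa [uIcc_of_le hab.le, uIcc_of_le hcd.le]
  have hmixed := integral_integral_mixed_difference hf
    (Icc_subset_uIcc (Ioo_subset_Icc_self hx₀)) (Icc_subset_uIcc (Ioo_subset_Icc_self hy₀))
  have hbound := abs_integral_integral_le_of_abs_le_mul (φ := fun t => M * |t - (a + b) / 2|)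
    (ψ := fun s => |s - (c + d) / 2|) hab.le hcd.le
    (fun t ht s hs => abs_mixed_difference_le (convex_Ioo a b) (convex_Ioo c d)
      (fun u hu v hv => hd1 u (Ioo_subset_Icc_self hu) v (Ioo_subset_Icc_self hv)) hd2 hM
      hx₀ ht hy₀ hs)
    (Continuous.intervalIntegrable (by fun_prop) a b)
    (Continuous.intervalIntegrable (by fun_prop) c d)
  rw [intervalIntegral.integral_const_mul, integral_abs_sub_midpoint hab.le,
    integral_abs_sub_midpoint hcd.le, hmixed] at hbound
  convert hbound using 1
  · congr 1; ring
  · ring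
end

section
/- Let f:[a,b]×[c,d]→ℝ be absolutely continuous with |∂²f/∂t∂s| ≤ M on (a,b)×(c,d). Then |((b-a)(d-c)/4)·[f(a,c)+f(a,d)+f(b,c)+f(b,d)] - ((d-c)/2)∫_a^b [f(t,c)+f(t,d)] dt - ((b-a)/2)∫_c^d [f(a,s)+f(b,s)] ds + ∫_a^b∫_c^d f(t,s) ds dt| ≤ (1/16)·M·(b-a)²(d-c)². -/
/-!
Write `T[a,b] φ = (b - a) / 2 * (φ a + φ b) - ∫ x in a..b, φ x` for the trapezoid remainder. The
quantity to bound is `T[a,b]` applied to `t ↦ T[c,d] (f t)`. Splitting `[a,b]` at its midpoint and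
comparing `φ` with the nearer endpoint gives `|T[a,b] φ| ≤ L (b - a)² / 4` for `L`-Lipschitz `φ`.
Two applications of the mean value theorem bound the mixed difference
`f u σ - f t σ - f u s + f t s` by `M |u - t| |σ - s|`, so `s ↦ f u s - f t s` is
`M |u - t|`-Lipschitz; by linearity of `T[c,d]`, `t ↦ T[c,d] (f t)` is then
`M (d - c)² / 4`-Lipschitz, and the one-variable bound applies once more.
-/

open Set intervalIntegral MeasureTheory
open scoped NNReal

noncomputable def trapezoidRemainder (a b : ℝ) (φ : ℝ → ℝ) : ℝ :=
  (b - a) / 2 * (φ a + φ b) - ∫ x in a..b, φ x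

section TrapezoidRemainder

variable {a b : ℝ} {φ ψ : ℝ → ℝ} {K : ℝ≥0}

theorem trapezoidRemainder_sub (hφ : IntervalIntegrable φ volume a b)
    (hψ : IntervalIntegrable ψ volume a b) :
    trapezoidRemainder a b (fun x => φ x - ψ x) =
      trapezoidRemainder a b φ - trapezoidRemainder a b ψ := by
  simp only [trapezoidRemainder, integral_sub hφ hψ]
  ring

theorem trapezoidRemainder_eq_integral_add_integral (hφ : IntervalIntegrable φ volume a b) :
    trapezoidRemainder a b φ =
      (∫ x in a..(a + b) / 2, (φ a - φ x)) + ∫ x in (a + b) / 2..b, (φ b - φ x) := by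
  have hmid : (a + b) / 2 ∈ uIcc a b := by
    rw [mem_uIcc]
    exact (le_total a b).imp (fun h => ⟨by linarith, by linarith⟩)
      (fun h => ⟨by linarith, by linarith⟩)
  have hleft : IntervalIntegrable φ volume a ((a + b) / 2) :=
    hφ.mono_set (uIcc_subset_uIcc_left hmid)
  have hright : IntervalIntegrable φ volume ((a + b) / 2) b :=
    hφ.mono_set (uIcc_subset_uIcc_right hmid)
  rw [integral_sub intervalIntegrable_const hleft, integral_sub intervalIntegrable_const hright,
    trapezoidRemainder, ← integral_add_adjacent_intervals hleft hright]
  simp only [intervalIntegral.integral_const, smul_eq_mul]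
  ring

theorem integral_abs_from_zero {r : ℝ} (hr : 0 ≤ r) : ∫ x in (0 : ℝ)..r, |x| = r ^ 2 / 2 := by
  rw [integral_congr fun x hx => abs_of_nonneg (uIcc_of_le hr ▸ hx).1]
  simp

theorem abs_integral_sub_le_of_lipschitzOnWith {p q x₀ : ℝ} (hpq : p ≤ q)
    (hφ : LipschitzOnWith K φ (Icc p q)) (hx₀ : x₀ ∈ Icc p q) :
    |∫ x in p..q, (φ x₀ - φ x)| ≤ K * ∫ x in p..q, |x - x₀| := by
  rw [← intervalIntegral.integral_const_mul, ← Real.norm_eq_abs]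
  refine norm_integral_le_of_norm_le hpq (Filter.Eventually.of_forall fun x hx => ?_)
    ((by fun_prop : Continuous fun x => (K : ℝ) * |x - x₀|).intervalIntegrable _ _)
  have := hφ.dist_le_mul x₀ hx₀ x (Ioc_subset_Icc_self hx)
  rwa [Real.dist_eq, Real.dist_eq, abs_sub_comm x₀] at this

theorem abs_trapezoidRemainder_le (hab : a ≤ b)
    (hφ : LipschitzOnWith K φ (Icc a b)) :
    |trapezoidRemainder a b φ| ≤ K * (b - a) ^ 2 / 4 := by
  have hint : IntervalIntegrable φ volume a b :=
    hφ.continuousOn.intervalIntegrable_of_Icc hab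
  have hleft : ∫ x in a..(a + b) / 2, |x - a| = (b - a) ^ 2 / 8 := by
    rw [integral_comp_sub_right (fun x => |x|), sub_self, integral_abs_from_zero (by linarith)]
    ring
  have hright : ∫ x in (a + b) / 2..b, |x - b| = (b - a) ^ 2 / 8 := by
    simp_rw [abs_sub_comm _ b]
    rw [integral_comp_sub_left (fun x => |x|), sub_self, integral_abs_from_zero (by linarith)]
    ring
  rw [trapezoidRemainder_eq_integral_add_integral hint]
  calc _ ≤ |∫ x in a..(a + b) / 2, (φ a - φ x)| + |∫ x in (a + b) / 2..b, (φ b - φ x)| :=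
        abs_add_le _ _
    _ ≤ K * (∫ x in a..(a + b) / 2, |x - a|) + K * ∫ x in (a + b) / 2..b, |x - b| := by
        gcongr
        · exact abs_integral_sub_le_of_lipschitzOnWith (by linarith)
            (hφ.mono (Icc_subset_Icc_right (by linarith))) ⟨le_rfl, by linarith⟩
        · exact abs_integral_sub_le_of_lipschitzOnWith (by linarith)
            (hφ.mono (Icc_subset_Icc_left (by linarith))) ⟨by linarith, le_rfl⟩
    _ = K * (b - a) ^ 2 / 4 := by rw [hleft, hright]; ring

end TrapezoidRemainder

section MixedDerivative

variable {a b c d : ℝ} {f f₁ f₂ : ℝ → ℝ → ℝ} {K : ℝ≥0}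

theorem lipschitzOnWith_sub_of_mixed_deriv (hab : a < b)
    (hd1 : ∀ t ∈ Icc a b, ∀ s ∈ Icc c d, HasDerivAt (fun u => f u s) (f₁ t s) t)
    (hd2 : ∀ t ∈ Ioo a b, ∀ s ∈ Ioo c d, HasDerivAt (fun v => f₁ t v) (f₂ t s) s)
    (hK : ∀ t ∈ Ioo a b, ∀ s ∈ Ioo c d, ‖f₂ t s‖₊ ≤ K) {s σ : ℝ} (hs : s ∈ Ioo c d)
    (hσ : σ ∈ Ioo c d) :
    LipschitzOnWith (K * nndist σ s) (fun t => f t σ - f t s) (Icc a b) := by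
  have hf₁ : ∀ t ∈ Ioo a b, LipschitzOnWith K (f₁ t) (Ioo c d) := fun t ht =>
    (convex_Ioo c d).lipschitzOnWith_of_nnnorm_hasDerivWithin_le
      (fun s hs => (hd2 t ht s hs).hasDerivWithinAt) (hK t ht)
  have hderiv : ∀ t ∈ Icc a b, HasDerivAt (fun u => f u σ - f u s) (f₁ t σ - f₁ t s) t :=
    fun t ht => (hd1 t ht σ (Ioo_subset_Icc_self hσ)).sub (hd1 t ht s (Ioo_subset_Icc_self hs))
  have hIoo : LipschitzOnWith (K * nndist σ s) (fun t => f t σ - f t s) (Ioo a b) :=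
    (convex_Ioo a b).lipschitzOnWith_of_nnnorm_hasDerivWithin_le
      (fun t ht => (hderiv t (Ioo_subset_Icc_self ht)).hasDerivWithinAt) fun t ht => by
        rw [← NNReal.coe_le_coe, coe_nnnorm, ← dist_eq_norm, NNReal.coe_mul, coe_nndist]
        exact (hf₁ t ht).dist_le_mul σ hσ s hs
  rw [← closure_Ioo hab.ne] at hderiv ⊢
  exact hIoo.closure fun t ht => (hderiv t ht).continuousAt.continuousWithinAt

theorem lipschitzOnWith_sub_slice_of_mixed_deriv (hab : a < b) (hcd : c < d)
    (hc : ContinuousOn (fun p : ℝ × ℝ => f p.1 p.2) (Icc a b ×ˢ Icc c d))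
    (hd1 : ∀ t ∈ Icc a b, ∀ s ∈ Icc c d, HasDerivAt (fun u => f u s) (f₁ t s) t)
    (hd2 : ∀ t ∈ Ioo a b, ∀ s ∈ Ioo c d, HasDerivAt (fun v => f₁ t v) (f₂ t s) s)
    (hK : ∀ t ∈ Ioo a b, ∀ s ∈ Ioo c d, ‖f₂ t s‖₊ ≤ K) {t u : ℝ} (ht : t ∈ Icc a b)
    (hu : u ∈ Icc a b) :
    LipschitzOnWith (K * nndist u t) (fun s => f u s - f t s) (Icc c d) := by
  have hIoo : LipschitzOnWith (K * nndist u t) (fun s => f u s - f t s) (Ioo c d) :=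
    LipschitzOnWith.of_dist_le_mul fun σ hσ s hs => by
      have := (lipschitzOnWith_sub_of_mixed_deriv hab hd1 hd2 hK hs hσ).dist_le_mul u hu t ht
      simp only [Real.dist_eq, NNReal.coe_mul, coe_nndist] at this ⊢
      calc |f u σ - f t σ - (f u s - f t s)| = |f u σ - f u s - (f t σ - f t s)| := by
            congr 1; ring
        _ ≤ K * |σ - s| * |u - t| := this
        _ = K * |u - t| * |σ - s| := by ring
  rw [← closure_Ioo hcd.ne]
  refine hIoo.closure ?_
  rw [closure_Ioo hcd.ne]
  exact (hc.uncurry_left u hu).sub (hc.uncurry_left t ht)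

end MixedDerivative

theorem lipschitzOnWith_trapezoidRemainder_slice {a b c d : ℝ} {f : ℝ → ℝ → ℝ} {K : ℝ≥0}
    (hcd : c ≤ d) (hint : ∀ t ∈ Icc a b, IntervalIntegrable (f t) volume c d)
    (hlip : ∀ t ∈ Icc a b, ∀ u ∈ Icc a b,
      LipschitzOnWith (K * nndist u t) (fun s => f u s - f t s) (Icc c d)) :
    LipschitzOnWith (K * Real.toNNReal ((d - c) ^ 2 / 4))
      (fun t => trapezoidRemainder c d (f t)) (Icc a b) :=
  LipschitzOnWith.of_dist_le_mul fun u hu t ht => by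
    rw [Real.dist_eq, ← trapezoidRemainder_sub (hint u hu) (hint t ht)]
    calc _ ≤ ↑(K * nndist u t) * (d - c) ^ 2 / 4 := abs_trapezoidRemainder_le hcd (hlip t ht u hu)
      _ = _ := by
        rw [NNReal.coe_mul, NNReal.coe_mul, Real.coe_toNNReal _ (by positivity), coe_nndist]
        ring

theorem trapezoidRemainder_trapezoidRemainder {a b c d : ℝ} {f : ℝ → ℝ → ℝ}
    (hfc : IntervalIntegrable (fun t => f t c) volume a b)
    (hfd : IntervalIntegrable (fun t => f t d) volume a b)
    (hfa : IntervalIntegrable (f a) volume c d) (hfb : IntervalIntegrable (f b) volume c d)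
    (hT : IntervalIntegrable (fun t => trapezoidRemainder c d (f t)) volume a b) :
    trapezoidRemainder a b (fun t => trapezoidRemainder c d (f t)) =
      ((b - a) * (d - c) / 4) * (f a c + f a d + f b c + f b d)
        - ((d - c) / 2) * (∫ t in a..b, f t c + f t d)
        - ((b - a) / 2) * (∫ s in c..d, f a s + f b s)
        + ∫ t in a..b, ∫ s in c..d, f t s := by
  have hinner : (fun t => ∫ s in c..d, f t s) =
      fun t => (d - c) / 2 * (f t c + f t d) - trapezoidRemainder c d (f t) := by
    funext t
    rw [trapezoidRemainder]
    ring
  rw [hinner, integral_sub ((hfc.add hfd).const_mul _) hT, intervalIntegral.integral_const_mul,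
    integral_add hfa hfb]
  simp only [trapezoidRemainder]
  ring

theorem sarikaya_trapezoid (a b c d M : ℝ) (hab : a < b) (hcd : c < d)
    (f f₁ f₂ : ℝ → ℝ → ℝ)
    (hc : ContinuousOn (fun p : ℝ × ℝ => f p.1 p.2) (Set.Icc a b ×ˢ Set.Icc c d))
    (hd1 : ∀ t ∈ Set.Icc a b, ∀ s ∈ Set.Icc c d, HasDerivAt (fun u => f u s) (f₁ t s) t)
    (hd2 : ∀ t ∈ Set.Ioo a b, ∀ s ∈ Set.Ioo c d, HasDerivAt (fun v => f₁ t v) (f₂ t s) s)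
    (hM : ∀ t ∈ Set.Ioo a b, ∀ s ∈ Set.Ioo c d, |f₂ t s| ≤ M) :
    |((b - a) * (d - c) / 4) * (f a c + f a d + f b c + f b d)
        - ((d - c) / 2) * (∫ t in a..b, f t c + f t d)
        - ((b - a) / 2) * (∫ s in c..d, f a s + f b s)
        + ∫ t in a..b, ∫ s in c..d, f t s| ≤
      (1 / 16) * M * (b - a) ^ 2 * (d - c) ^ 2 := by
  have hM₀ : 0 ≤ M := (abs_nonneg _).trans
    (hM ((a + b) / 2) ⟨by linarith, by linarith⟩ ((c + d) / 2) ⟨by linarith, by linarith⟩)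
  have hK : ∀ t ∈ Ioo a b, ∀ s ∈ Ioo c d, ‖f₂ t s‖₊ ≤ M.toNNReal := fun t ht s hs => by
    rw [← NNReal.coe_le_coe, coe_nnnorm, Real.coe_toNNReal _ hM₀]
    exact hM t ht s hs
  have hslice : ∀ t ∈ Icc a b, IntervalIntegrable (f t) volume c d := fun t ht =>
    (hc.uncurry_left t ht).intervalIntegrable_of_Icc hcd.le
  have hslice' : ∀ s ∈ Icc c d, IntervalIntegrable (fun t => f t s) volume a b := fun s hs =>
    (hc.uncurry_right s hs).intervalIntegrable_of_Icc hab.le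
  have hT := lipschitzOnWith_trapezoidRemainder_slice hcd.le hslice fun t ht u hu =>
    lipschitzOnWith_sub_slice_of_mixed_deriv hab hcd hc hd1 hd2 hK ht hu
  rw [← trapezoidRemainder_trapezoidRemainder (hslice' c (left_mem_Icc.2 hcd.le))
    (hslice' d (right_mem_Icc.2 hcd.le)) (hslice a (left_mem_Icc.2 hab.le))
    (hslice b (right_mem_Icc.2 hab.le)) (hT.continuousOn.intervalIntegrable_of_Icc hab.le)]
  calc _ ≤ ↑(M.toNNReal * Real.toNNReal ((d - c) ^ 2 / 4)) * (b - a) ^ 2 / 4 :=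
        abs_trapezoidRemainder_le hab.le hT
    _ = _ := by
      rw [NNReal.coe_mul, Real.coe_toNNReal _ hM₀, Real.coe_toNNReal _ (by positivity)]
      ring
end
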